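/- arXiv:2409.09526 — 5 statements merged into one kernel-verified Lean document; each statement's English description precedes it below -/
import Mathlib

section
/- Let M be a real symmetric positive semidefinite N×N matrix, S a subset of {1,…,N} with complement Sᶜ, J the diagonal matrix with J_ii = 1 for i ∈ S and J_ii = −1 for i ∈ Sᶜ, and Q the block-diagonal part of M with respect to the partition (S, Sᶜ). Then for every vector u and scalar λ with M u = λ Q u, one has M (J u) = (2 − λ) Q (J u); that is, the (M,Q)-GFT has the spectral folding property: (u, λ) a generalized eigenpair implies (J u, 2 − λ) is a generalized eigenpair. -/
/-!
Write `s i = ±1` for the sign of `i` with respect to `S`, so that `J = diagonal s`. Conjugation by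
`J` multiplies the entry `M i j` by `s i * s j`, which is `1` on the diagonal blocks and `-1` on the
off-diagonal ones; hence `J * M * J = 2 • Q - M` while `J` commutes with `Q`. As `J * J = 1`,
`M (J u) = J ((2 • Q - M) u) = J ((2 - λ) Q u) = (2 - λ) Q (J u)`.
-/

open Matrix

namespace Matrix

section Definitions

variable {ι R : Type*}

def signDiagonal [DecidableEq ι] [Zero R] [One R] [Neg R] (S : Finset ι) : Matrix ι ι R :=
  diagonal fun i => if i ∈ S then 1 else -1

def blockDiagonalPart [DecidableEq ι] [Zero R] (S : Finset ι) (M : Matrix ι ι R) : Matrix ι ι R :=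
  of fun i j => if (i ∈ S ↔ j ∈ S) then M i j else 0

end Definitions

section Folding

variable {ι R : Type*} [Fintype ι]

theorem signDiagonal_mul_self [DecidableEq ι] [Ring R] (S : Finset ι) :
    signDiagonal S * signDiagonal S = (1 : Matrix ι ι R) := by
  rw [signDiagonal, diagonal_mul_diagonal, ← diagonal_one]
  congr 1
  ext i
  by_cases hi : i ∈ S <;> simp [hi]

theorem blockDiagonalPart_mul_signDiagonal_comm [DecidableEq ι] [Ring R] (S : Finset ι)
    (M : Matrix ι ι R) :
    blockDiagonalPart S M * signDiagonal S = signDiagonal S * blockDiagonalPart S M := by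
  ext i j
  simp only [blockDiagonalPart, signDiagonal, mul_diagonal, diagonal_mul, of_apply]
  by_cases hi : i ∈ S <;> by_cases hj : j ∈ S <;> simp [hi, hj]

theorem mul_signDiagonal_eq [DecidableEq ι] [Ring R] (S : Finset ι) (M : Matrix ι ι R) :
    M * signDiagonal S = signDiagonal S * ((2 : R) • blockDiagonalPart S M - M) := by
  ext i j
  simp only [blockDiagonalPart, signDiagonal, mul_diagonal, diagonal_mul, sub_apply, smul_apply,
    smul_eq_mul, of_apply]
  by_cases hi : i ∈ S <;> by_cases hj : j ∈ S <;> simp [hi, hj] <;> noncomm_ring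

theorem mulVec_eq_zero_of_mul_self_eq_one [DecidableEq ι] [Semiring R] {J : Matrix ι ι R}
    (hJ : J * J = 1) {u : ι → R} (hu : J *ᵥ u = 0) : u = 0 := by
  rw [← one_mulVec u, ← hJ, ← mulVec_mulVec, hu, mulVec_zero]

theorem mulVec_mulVec_eq_two_sub_smul_of_mul_eq [CommRing R] {J M Q : Matrix ι ι R}
    (hMJ : M * J = J * ((2 : R) • Q - M)) (hQJ : Q * J = J * Q) {u : ι → R} {lam : R}
    (h : M *ᵥ u = lam • Q *ᵥ u) : M *ᵥ (J *ᵥ u) = (2 - lam) • Q *ᵥ (J *ᵥ u) := by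
  calc M *ᵥ (J *ᵥ u) = J *ᵥ ((2 : R) • Q *ᵥ u - M *ᵥ u) := by
        rw [mulVec_mulVec, hMJ, ← mulVec_mulVec, sub_mulVec, smul_mulVec]
    _ = (2 - lam) • Q *ᵥ (J *ᵥ u) := by
        rw [h, ← sub_smul, mulVec_smul, mulVec_mulVec, ← hQJ, ← mulVec_mulVec]

end Folding

end Matrix

theorem spectral_folding_eigenpair_general
    {N : ℕ}
    (M : Matrix (Fin N) (Fin N) ℝ)
    (S : Finset (Fin N))
    (J : Matrix (Fin N) (Fin N) ℝ)
    (hJ : J = Matrix.diagonal (fun i => if i ∈ S then (1 : ℝ) else -1))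
    (Q : Matrix (Fin N) (Fin N) ℝ)
    (hQ : ∀ i j, Q i j =
      if (i ∈ S ∧ j ∈ S) ∨ (i ∉ S ∧ j ∉ S) then M i j else 0)
    (u : Fin N → ℝ) (lam : ℝ)
    (h : M.mulVec u = lam • Q.mulVec u) :
    M.mulVec (J.mulVec u) = (2 - lam) • Q.mulVec (J.mulVec u) ∧
      (u ≠ 0 → J.mulVec u ≠ 0) := by
  obtain rfl : J = signDiagonal S := hJ
  obtain rfl : Q = blockDiagonalPart S M := by
    ext i j
    simp only [hQ, blockDiagonalPart, of_apply, iff_iff_and_or_not_and_not]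
  exact ⟨mulVec_mulVec_eq_two_sub_smul_of_mul_eq (mul_signDiagonal_eq S M)
      (blockDiagonalPart_mul_signDiagonal_comm S M) h,
    fun hu hJu => hu (mulVec_eq_zero_of_mul_self_eq_one (signDiagonal_mul_self S) hJu)⟩

/-- Spectral folding property of the (M, Q(S))-GFT: if (u, λ) is a generalized
eigenpair of (M, Q), i.e. M u = λ Q u, then (J u, 2 − λ) is also a generalized
eigenpair, where J = diag(±1) according to membership in S and Q is the
block-diagonal part of M with respect to the partition (S, Sᶜ). -/
theorem spectral_folding_eigenpair
    {N : ℕ} (hN : 1 ≤ N)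
    (M : Matrix (Fin N) (Fin N) ℝ) (hM : M.PosSemidef)
    (S : Finset (Fin N))
    (J : Matrix (Fin N) (Fin N) ℝ)
    (hJ : J = Matrix.diagonal (fun i => if i ∈ S then (1 : ℝ) else -1))
    (Q : Matrix (Fin N) (Fin N) ℝ)
    (hQ : ∀ i j, Q i j =
      if (i ∈ S ∧ j ∈ S) ∨ (i ∉ S ∧ j ∉ S) then M i j else 0)
    (u : Fin N → ℝ) (lam : ℝ)
    (h : M.mulVec u = lam • Q.mulVec u) :
    M.mulVec (J.mulVec u) = (2 - lam) • Q.mulVec (J.mulVec u) ∧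
      (u ≠ 0 → J.mulVec u ≠ 0) :=
  spectral_folding_eigenpair_general M S J hJ Q hQ u lam h
end

section
/- Let M be a real symmetric positive semidefinite N×N matrix, S ⊆ {1,…,N}, Q the block-diagonal part of M with respect to (S, Sᶜ) assumed positive definite, and U a Q-orthonormal generalized eigenbasis of (M,Q) with eigenvalues λ_1 ≤ … ≤ λ_N satisfying the folding pairing u_{N+1−k} = J u_k. Let L = {k : λ_k < 1}. Then for all k, l ∈ L: (u_k)_Sᵀ Q_S (u_l)_S = (1/2) δ_{kl} and (u_k)_{Sᶜ}ᵀ Q_{Sᶜ} (u_l)_{Sᶜ} = (1/2) δ_{kl}; in matrix form, U_{SL}ᵀ Q_S U_{SL} = (1/2) I and U_{SᶜL}ᵀ Q_{Sᶜ} U_{SᶜL} = (1/2) I. -/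
/-!
With P the coordinate projection onto S we have J = 2P - 1 and Q = PMP + (1 - P)M(1 - P), hence
JMJ = 2Q - M. The folding u_{rev k} = J u_k therefore gives λ_{rev k} = 2 - λ_k, so k ≠ rev l for
k, l ∈ L. The block Gram matrices A = UᵀPMPU and B = Uᵀ(1 - P)M(1 - P)U satisfy A + B = UᵀQU = 1
and A - B = UᵀQJU = UᵀQU_rev, whose (k, l) entry is δ_{k, rev l} and vanishes on L × L.
Hence A = B = 1/2 on L × L.
-/

open Matrix

namespace Matrix

variable {l m n l' n' α : Type*}

theorem submatrix_subtype_val_mul_submatrix_subtype_val [Fintype m] [DecidableEq m] [Semiring α]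
    (p : m → Prop) [DecidablePred p] [Fintype (Subtype p)] (A : Matrix l m α) (B : Matrix m n α)
    (r : l' → l) (c : n' → n) :
    A.submatrix r (Subtype.val : Subtype p → m) * B.submatrix (Subtype.val : Subtype p → m) c =
      (A * diagonal (fun i => if p i then (1 : α) else 0) * B).submatrix r c := by
  ext i k
  rw [Matrix.mul_assoc, submatrix_apply, mul_apply, mul_apply]
  simp only [submatrix_apply, diagonal_mul, ite_mul, one_mul, zero_mul, mul_ite, mul_zero]
  rw [← Finset.sum_filter, Finset.sum_subtype _ Finset.mem_filter_univ]

theorem submatrix_transpose_mul_mul_submatrix [Fintype n] [Semiring α] (A B : Matrix n n α)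
    (σ : n → n) :
    (A.submatrix id σ)ᵀ * B * A.submatrix id σ = (Aᵀ * B * A).submatrix σ σ := by
  rw [submatrix_mul _ _ _ id _ Function.bijective_id, submatrix_mul _ _ _ id _
    Function.bijective_id, transpose_submatrix, submatrix_id_id]

theorem transpose_mul_mul_eq_diagonal [Fintype n] [DecidableEq n] [Semiring α]
    {M Q U : Matrix n n α} {lam : n → α} (hUQU : Uᵀ * Q * U = 1)
    (hMU : M * U = Q * U * diagonal lam) : Uᵀ * M * U = diagonal lam := by
  rw [Matrix.mul_assoc, hMU, ← Matrix.mul_assoc, ← Matrix.mul_assoc, hUQU, Matrix.one_mul]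

end Matrix

section Pinching

variable {R : Type*} [Ring R]

/-- The block-diagonal part of `M` with respect to the idempotent `P`; the paper's `Q`. -/
def pinching (P M : R) : R := P * M * P + (1 - P) * M * (1 - P)

theorem reflection_mul_mul_reflection (P M : R) :
    (2 * P - 1) * M * (2 * P - 1) = 2 * pinching P M - M := by
  unfold pinching
  noncomm_ring

theorem pinching_mul_reflection {P : R} (hP : IsIdempotentElem P) (M : R) :
    pinching P M * (2 * P - 1) = P * M * P - (1 - P) * M * (1 - P) := by
  have hP₁ : P * (2 * P - 1) = P := by
    rw [show P * (2 * P - 1) = 2 * (P * P) - P by noncomm_ring, hP.eq]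
    noncomm_ring
  have hP₂ : (1 - P) * (2 * P - 1) = -(1 - P) := by
    rw [show (1 - P) * (2 * P - 1) = 3 * P - 2 * (P * P) - 1 by noncomm_ring, hP.eq]
    noncomm_ring
  calc pinching P M * (2 * P - 1)
      = P * M * (P * (2 * P - 1)) + (1 - P) * M * ((1 - P) * (2 * P - 1)) := by
        unfold pinching
        noncomm_ring
    _ = P * M * P - (1 - P) * M * (1 - P) := by
        rw [hP₁, hP₂]
        noncomm_ring

end Pinching

section Folding

variable {n K : Type*} [Fintype n] [DecidableEq n] [Field K] {P M U : Matrix n n K}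
  {lam : n → K} {σ : n → n}

theorem eigenvalue_fold_eq_two_sub (hPt : Pᵀ = P) (hUQU : Uᵀ * pinching P M * U = 1)
    (hMU : M * U = pinching P M * U * diagonal lam)
    (hfold : U.submatrix id σ = (2 * P - 1) * U) (l : n) :
    lam (σ l) = 2 - lam l := by
  have hD := transpose_mul_mul_eq_diagonal hUQU hMU
  have hJt : (2 * P - 1)ᵀ = 2 * P - 1 := by
    rw [two_mul, transpose_sub, transpose_add, hPt, transpose_one]
  have hDσ : (diagonal lam).submatrix σ σ = 2 - diagonal lam :=
    calc (diagonal lam).submatrix σ σ = (U.submatrix id σ)ᵀ * M * U.submatrix id σ := by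
          rw [submatrix_transpose_mul_mul_submatrix, hD]
      _ = Uᵀ * ((2 * P - 1) * M * (2 * P - 1)) * U := by
          rw [hfold, transpose_mul, hJt]
          simp only [Matrix.mul_assoc]
      _ = 2 - diagonal lam := by
          rw [reflection_mul_mul_reflection, two_mul, Matrix.mul_sub, Matrix.sub_mul,
            Matrix.mul_add, Matrix.add_mul, hUQU, hD, one_add_one_eq_two]
  simpa [ofNat_apply] using congrFun (congrFun hDσ l) l

theorem folded_blocks_sub_eq (hP : IsIdempotentElem P) (hUQU : Uᵀ * pinching P M * U = 1)
    (hfold : U.submatrix id σ = (2 * P - 1) * U) :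
    Uᵀ * P * M * P * U - Uᵀ * (1 - P) * M * (1 - P) * U = (1 : Matrix n n K).submatrix id σ :=
  calc Uᵀ * P * M * P * U - Uᵀ * (1 - P) * M * (1 - P) * U
      = Uᵀ * (pinching P M * (2 * P - 1)) * U := by
        rw [pinching_mul_reflection hP]
        noncomm_ring
    _ = (Uᵀ * pinching P M * U).submatrix id σ := by
        rw [submatrix_mul _ _ _ id _ Function.bijective_id, submatrix_id_id, hfold]
        simp only [Matrix.mul_assoc]
    _ = (1 : Matrix n n K).submatrix id σ := by rw [hUQU]

variable [LinearOrder K] [IsStrictOrderedRing K]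

theorem folded_blocks_eq_half (hPt : Pᵀ = P) (hP : IsIdempotentElem P)
    (hUQU : Uᵀ * pinching P M * U = 1) (hMU : M * U = pinching P M * U * diagonal lam)
    (hfold : U.submatrix id σ = (2 * P - 1) * U) :
    (Uᵀ * P * M * P * U).submatrix (Subtype.val : {k // lam k < 1} → n)
        (Subtype.val : {k // lam k < 1} → n) = (1 / 2 : K) • 1 ∧
      (Uᵀ * (1 - P) * M * (1 - P) * U).submatrix (Subtype.val : {k // lam k < 1} → n)
        (Subtype.val : {k // lam k < 1} → n) = (1 / 2 : K) • 1 := by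
  have hadd : Uᵀ * P * M * P * U + Uᵀ * (1 - P) * M * (1 - P) * U = 1 :=
    .trans (by unfold pinching; noncomm_ring) hUQU
  have hsub := folded_blocks_sub_eq hP hUQU hfold
  have entry {k l : n} (hk : lam k < 1) (hl : lam l < 1) :
      (Uᵀ * P * M * P * U) k l = (1 : Matrix n n K) k l / 2 ∧
        (Uᵀ * (1 - P) * M * (1 - P) * U) k l = (1 : Matrix n n K) k l / 2 := by
    have hne : k ≠ σ l := by
      rintro rfl
      linarith [eigenvalue_fold_eq_two_sub hPt hUQU hMU hfold l]
    have h₁ := congrFun (congrFun hadd k) l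
    have h₂ := congrFun (congrFun hsub k) l
    rw [Matrix.add_apply] at h₁
    rw [Matrix.sub_apply, submatrix_apply, id, one_apply_ne hne] at h₂
    constructor <;> linarith
  constructor <;> ext ⟨k, hk⟩ ⟨l, hl⟩ <;> simp [entry hk hl, one_apply, div_eq_inv_mul]

end Folding

theorem low_freq_half_orthonormal_general
    {N : ℕ}
    (M : Matrix (Fin N) (Fin N) ℝ)
    (S : Finset (Fin N))
    (J : Matrix (Fin N) (Fin N) ℝ)
    (hJ : J = Matrix.diagonal (fun i => if i ∈ S then (1 : ℝ) else -1))
    (Q : Matrix (Fin N) (Fin N) ℝ)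
    (hQ : ∀ i j, Q i j =
      if (i ∈ S ∧ j ∈ S) ∨ (i ∉ S ∧ j ∉ S) then M i j else 0)
    (lam : Fin N → ℝ)
    (U : Matrix (Fin N) (Fin N) ℝ)
    (hUQU : Uᵀ * Q * U = 1)
    (hMU : M * U = Q * U * Matrix.diagonal lam)
    (hfold : ∀ k : Fin N, (fun i => U i k.rev) = J.mulVec (fun i => U i k)) :
    (U.submatrix (Subtype.val : {i : Fin N // i ∈ S} → Fin N)
          (Subtype.val : {k : Fin N // lam k < 1} → Fin N))ᵀ *
        M.submatrix (Subtype.val : {i : Fin N // i ∈ S} → Fin N)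
          (Subtype.val : {i : Fin N // i ∈ S} → Fin N) *
        U.submatrix (Subtype.val : {i : Fin N // i ∈ S} → Fin N)
          (Subtype.val : {k : Fin N // lam k < 1} → Fin N) =
      (1 / 2 : ℝ) • 1 ∧
    (U.submatrix (Subtype.val : {i : Fin N // i ∉ S} → Fin N)
          (Subtype.val : {k : Fin N // lam k < 1} → Fin N))ᵀ *
        M.submatrix (Subtype.val : {i : Fin N // i ∉ S} → Fin N)
          (Subtype.val : {i : Fin N // i ∉ S} → Fin N) *
        U.submatrix (Subtype.val : {i : Fin N // i ∉ S} → Fin N)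
          (Subtype.val : {k : Fin N // lam k < 1} → Fin N) =
      (1 / 2 : ℝ) • 1 := by
  set P : Matrix (Fin N) (Fin N) ℝ := diagonal fun i => if i ∈ S then 1 else 0 with hPdef
  have hP : IsIdempotentElem P := by
    rw [IsIdempotentElem, diagonal_mul_diagonal]
    congr with i
    split_ifs <;> norm_num
  have hPc : diagonal (fun i => if i ∉ S then (1 : ℝ) else 0) = 1 - P := by
    rw [← diagonal_one, diagonal_sub]
    congr with i
    split_ifs <;> norm_num
  have hQP : Q = pinching P M := by
    ext i j
    rw [hQ, pinching, ← hPc]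
    by_cases hi : i ∈ S <;> by_cases hj : j ∈ S <;>
      simp [hi, hj, hPdef, diagonal_mul, mul_diagonal]
  have hJP : J = 2 * P - 1 := by
    rw [hJ, two_mul, ← diagonal_one, diagonal_add, diagonal_sub]
    congr with i
    split_ifs <;> norm_num
  have hfold' : U.submatrix id Fin.rev = (2 * P - 1) * U := by
    ext i k
    simpa [← hJP, mulVec, dotProduct, mul_apply] using congrFun (hfold k) i
  subst hQP
  simp only [transpose_submatrix, submatrix_subtype_val_mul_submatrix_subtype_val, hPc]
  exact folded_blocks_eq_half (diagonal_transpose _) hP hUQU hMU hfold'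

/-- Under the spectral-folding setup, the low-frequency eigenvectors restricted
to S (resp. Sᶜ) are (1/2)-orthonormal with respect to Q_S = M_{SS}
(resp. Q_{Sᶜ} = M_{SᶜSᶜ}):
U_{SL}ᵀ Q_S U_{SL} = (1/2) I and U_{SᶜL}ᵀ Q_{Sᶜ} U_{SᶜL} = (1/2) I. -/
theorem low_freq_half_orthonormal
    {N : ℕ} (hN : 1 ≤ N)
    (M : Matrix (Fin N) (Fin N) ℝ) (hM : M.PosSemidef)
    (S : Finset (Fin N))
    (J : Matrix (Fin N) (Fin N) ℝ)
    (hJ : J = Matrix.diagonal (fun i => if i ∈ S then (1 : ℝ) else -1))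
    (Q : Matrix (Fin N) (Fin N) ℝ)
    (hQ : ∀ i j, Q i j =
      if (i ∈ S ∧ j ∈ S) ∨ (i ∉ S ∧ j ∉ S) then M i j else 0)
    (hQpd : Q.PosDef)
    (lam : Fin N → ℝ) (hlam : Monotone lam)
    (U : Matrix (Fin N) (Fin N) ℝ)
    (hUQU : Uᵀ * Q * U = 1)
    (hMU : M * U = Q * U * Matrix.diagonal lam)
    (hfold : ∀ k : Fin N, (fun i => U i k.rev) = J.mulVec (fun i => U i k)) :
    (U.submatrix (Subtype.val : {i : Fin N // i ∈ S} → Fin N)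
          (Subtype.val : {k : Fin N // lam k < 1} → Fin N))ᵀ *
        M.submatrix (Subtype.val : {i : Fin N // i ∈ S} → Fin N)
          (Subtype.val : {i : Fin N // i ∈ S} → Fin N) *
        U.submatrix (Subtype.val : {i : Fin N // i ∈ S} → Fin N)
          (Subtype.val : {k : Fin N // lam k < 1} → Fin N) =
      (1 / 2 : ℝ) • 1 ∧
    (U.submatrix (Subtype.val : {i : Fin N // i ∉ S} → Fin N)
          (Subtype.val : {k : Fin N // lam k < 1} → Fin N))ᵀ *
        M.submatrix (Subtype.val : {i : Fin N // i ∉ S} → Fin N)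
          (Subtype.val : {i : Fin N // i ∉ S} → Fin N) *
        U.submatrix (Subtype.val : {i : Fin N // i ∉ S} → Fin N)
          (Subtype.val : {k : Fin N // lam k < 1} → Fin N) =
      (1 / 2 : ℝ) • 1 :=
  low_freq_half_orthonormal_general M S J hJ Q hQ lam U hUQU hMU hfold
end

section
/- (Theorem 1) Under the spectral-folding setup with |L| = |H| = |S|, let x ∈ ℝᴺ and let x̂ = UᵀQx with low-, middle-, and high-frequency components x̂_L (entries of x̂ indexed by L), Δx̂_m (entries indexed by Mid), and Δx̂_h (entries indexed by H). If x̃ = 2 U_{VL} U_{SL}ᵀ Q_S x_S is the spectral-folding bandlimited interpolation of x from its samples x_S, then the reconstruction error in the Q-norm is ‖x̃ − x‖²_Q = 2‖Δx̂_h‖²₂ + ‖Δx̂_m‖²₂; in particular it depends only on the middle- and high-frequency content of x. -/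
/-!
Conjugation by `J` sends `M` to `2Q - M` and commutes with `Q`, so the folding `u_{rev k} = J u_k`
forces `λ_{rev k} = 2 - λ_k`: reversal exchanges the low and high bands. Restricting to `S` is the
projection `(1 + J) / 2`, hence for `k ∈ L` the interpolant has GFT coefficient
`2 (U_{SL}ᵀ Q_S x_S)_k = x̂_k + x̂_{rev k}`, and it has none outside `L`. The error thus has GFT
coefficients `x̂_{rev k}` on `L` and `-x̂_k` elsewhere, and since `U` is `Q`-orthonormal its
squared `Q`-norm is the sum of their squares.
-/

open Matrix Finset

variable {n R : Type*} [Fintype n]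

theorem submatrix_id_val_mulVec {m : Type*} [CommRing R] (U : Matrix m n R) (p : n → Prop)
    [DecidablePred p] (c : {k // p k} → R) :
    U.submatrix id Subtype.val *ᵥ c = U *ᵥ fun k => if h : p k then c ⟨k, h⟩ else 0 := by
  ext i
  simp only [mulVec, dotProduct, submatrix_apply, id, mul_dite, mul_zero, sum_dite, sum_const_zero,
    add_zero]
  exact ((Equiv.subtypeEquivRight (by simp)).sum_comp _).symm

theorem sum_ite_lt_one_comp_involutive {lam : n → ℝ} {σ : n → n} (hσ : Function.Involutive σ)
    (hfold : ∀ k, lam (σ k) = 2 - lam k) (f : n → ℝ) :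
    ∑ k, (if lam k < 1 then f (σ k) else f k) =
      2 * ∑ k ∈ univ.filter (1 < lam ·), f k + ∑ k ∈ univ.filter (lam · = 1), f k := by
  have hsplit : ∑ k, (if lam k < 1 then f (σ k) else f k) =
      ∑ k, (if lam k < 1 then f (σ k) else 0) + ∑ k, (if 1 < lam k then f k else 0) +
        ∑ k, (if lam k = 1 then f k else 0) := by
    rw [← sum_add_distrib, ← sum_add_distrib]
    refine sum_congr rfl fun k _ => ?_
    rcases lt_trichotomy (lam k) 1 with hk | hk | hk
    · simp [hk, hk.not_gt, hk.ne]
    · simp [hk]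
    · simp [hk, hk.not_gt, hk.ne']
  have hreflect : ∑ k, (if lam k < 1 then f (σ k) else 0) = ∑ k, if 1 < lam k then f k else 0 := by
    rw [← Equiv.sum_comp (hσ.toPerm σ)]
    refine sum_congr rfl fun k _ => ?_
    simp only [Function.Involutive.coe_toPerm, hfold, hσ k]
    exact if_congr ⟨fun _ => by linarith, fun _ => by linarith⟩ rfl rfl
  rw [hsplit, hreflect, sum_filter, sum_filter]
  ring

variable [DecidableEq n]

section QOrthonormal

variable [CommRing R] {Q U : Matrix n n R}

theorem mulVec_dotProduct_mulVec_mulVec (h : Uᵀ * Q * U = 1) (w : n → R) :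
    U *ᵥ w ⬝ᵥ Q *ᵥ (U *ᵥ w) = w ⬝ᵥ w := by
  rw [mulVec_mulVec, dotProduct_mulVec, ← vecMul_transpose, vecMul_vecMul, ← mul_assoc, h,
    vecMul_one]

theorem mulVec_transpose_ne_zero [Nontrivial R] (h : Uᵀ * Q * U = 1) (k : n) :
    Q *ᵥ Uᵀ k ≠ 0 := by
  intro h0
  have hkk := mul_mul_apply Uᵀ Q U k k
  rw [h, one_apply_eq, h0, dotProduct_zero] at hkk
  exact one_ne_zero hkk

theorem mulVec_transpose_eq_smul {M : Matrix n n R} {d : n → R}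
    (h : M * U = Q * U * diagonal d) (k : n) : M *ᵥ Uᵀ k = d k • Q *ᵥ Uᵀ k := by
  ext i
  change (M * U) i k = d k * (Q * U) i k
  rw [h, mul_diagonal, mul_comm]

end QOrthonormal

section SignStructure

variable [CommRing R] (S : Finset n)

def signDiag : Matrix n n R := diagonal fun i => if i ∈ S then 1 else -1

def blockDiagPart (M : Matrix n n R) : Matrix n n R :=
  of fun i j => if (i ∈ S ↔ j ∈ S) then M i j else 0

omit [Fintype n] in
@[simp]
theorem blockDiagPart_apply (M : Matrix n n R) (i j : n) :
    blockDiagPart S M i j = if (i ∈ S ↔ j ∈ S) then M i j else 0 := rfl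

theorem blockDiagPart_mul_signDiag (M : Matrix n n R) :
    blockDiagPart S M * signDiag S = signDiag S * blockDiagPart S M := by
  ext i j
  by_cases hi : i ∈ S <;> by_cases hj : j ∈ S <;> simp [signDiag, hi, hj]

theorem mul_signDiag (M : Matrix n n R) :
    M * signDiag S = signDiag S * ((2 : R) • blockDiagPart S M - M) := by
  ext i j
  by_cases hi : i ∈ S <;> by_cases hj : j ∈ S <;> simp [signDiag, hi, hj] <;> ring

theorem dotProduct_add_signDiag_mulVec_dotProduct (u w : n → R) :
    u ⬝ᵥ w + (signDiag S *ᵥ u) ⬝ᵥ w = 2 * ∑ j ∈ S, u j * w j := by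
  calc _ = ∑ j, if j ∈ S then 2 * (u j * w j) else 0 := by
        simp only [dotProduct, ← sum_add_distrib]
        refine sum_congr rfl fun j _ => ?_
        by_cases hj : j ∈ S
        · simp [signDiag, mulVec_diagonal, hj]
          ring
        · simp [signDiag, mulVec_diagonal, hj]
    _ = _ := by rw [sum_ite_mem, univ_inter, mul_sum]

theorem blockDiagPart_mulVec_of_mem (M : Matrix n n R) (x : n → R) {i : n} (hi : i ∈ S) :
    (blockDiagPart S M *ᵥ x) i = ∑ j ∈ S, M i j * x j := by
  simp [mulVec, dotProduct, hi, ite_mul]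

theorem submatrix_transpose_mul_submatrix_mulVec {m ι : Type*} (U : Matrix n m R)
    (M : Matrix n n R) (e : ι → m) (x : n → R) :
    ((U.submatrix (Subtype.val : {i // i ∈ S} → n) e)ᵀ *
        M.submatrix (Subtype.val : {i // i ∈ S} → n) (Subtype.val : {i // i ∈ S} → n)) *ᵥ
        (fun j => x j.val) =
      fun l => ∑ j ∈ S, U j (e l) * (blockDiagPart S M *ᵥ x) j := by
  ext l
  rw [← mulVec_mulVec, ← sum_coe_sort S]
  refine sum_congr rfl fun j _ => ?_
  rw [blockDiagPart_mulVec_of_mem S M x j.2, ← sum_coe_sort S]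
  rfl

end SignStructure

theorem folded_eigenvalue_eq_two_sub [Field R] {S : Finset n} {M : Matrix n n R} {u : n → R}
    {a b : R} (hu : M *ᵥ u = a • blockDiagPart S M *ᵥ u)
    (hv : M *ᵥ (signDiag S *ᵥ u) = b • blockDiagPart S M *ᵥ (signDiag S *ᵥ u))
    (hne : blockDiagPart S M *ᵥ (signDiag S *ᵥ u) ≠ 0) : b = 2 - a := by
  have hfold : M *ᵥ (signDiag S *ᵥ u) = (2 - a) • blockDiagPart S M *ᵥ (signDiag S *ᵥ u) := by
    rw [mulVec_mulVec, mul_signDiag, ← mulVec_mulVec, sub_mulVec, smul_mulVec, hu, ← sub_smul,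
      mulVec_smul, mulVec_mulVec, ← blockDiagPart_mul_signDiag, ← mulVec_mulVec]
  rw [hv, ← sub_eq_zero, ← sub_smul] at hfold
  exact sub_eq_zero.mp ((smul_eq_zero.mp hfold).resolve_right hne)

theorem sf_reconstruction_error_general
    {N : ℕ}
    (M : Matrix (Fin N) (Fin N) ℝ)
    (S : Finset (Fin N))
    (J : Matrix (Fin N) (Fin N) ℝ)
    (hJ : J = Matrix.diagonal (fun i => if i ∈ S then (1 : ℝ) else -1))
    (Q : Matrix (Fin N) (Fin N) ℝ)
    (hQ : ∀ i j, Q i j =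
      if (i ∈ S ∧ j ∈ S) ∨ (i ∉ S ∧ j ∉ S) then M i j else 0)
    (lam : Fin N → ℝ)
    (U : Matrix (Fin N) (Fin N) ℝ)
    (hUQU : Uᵀ * Q * U = 1)
    (hMU : M * U = Q * U * Matrix.diagonal lam)
    (hfold : ∀ k : Fin N, (fun i => U i k.rev) = J.mulVec (fun i => U i k))
    (QS : Matrix {i : Fin N // i ∈ S} {i : Fin N // i ∈ S} ℝ)
    (hQS : QS = M.submatrix Subtype.val Subtype.val)
    (UVL : Matrix (Fin N) {k : Fin N // lam k < 1} ℝ)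
    (hUVL : UVL = U.submatrix id Subtype.val)
    (USL : Matrix {i : Fin N // i ∈ S} {k : Fin N // lam k < 1} ℝ)
    (hUSL : USL = U.submatrix Subtype.val Subtype.val)
    (x : Fin N → ℝ) (xt : Fin N → ℝ)
    (hxt : xt = ((2 : ℝ) • (UVL * (USLᵀ * QS))).mulVec
      (fun j : {i : Fin N // i ∈ S} => x j.val)) :
    (xt - x) ⬝ᵥ Q.mulVec (xt - x) =
      2 * (∑ k ∈ Finset.univ.filter (fun k : Fin N => 1 < lam k),
            ((Uᵀ * Q).mulVec x k) ^ 2) +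
        ∑ k ∈ Finset.univ.filter (fun k : Fin N => lam k = 1),
          ((Uᵀ * Q).mulVec x k) ^ 2 := by
  obtain rfl : Q = blockDiagPart S M := by
    ext i j
    rw [hQ, blockDiagPart_apply]
    exact if_congr iff_iff_and_or_not_and_not.symm rfl rfl
  obtain rfl : J = signDiag S := hJ
  set xh := (Uᵀ * blockDiagPart S M) *ᵥ x
  set g := (USLᵀ * QS) *ᵥ fun j : {i // i ∈ S} => x j.val with hg
  have hrev (k : Fin N) : lam k.rev = 2 - lam k :=
    folded_eigenvalue_eq_two_sub (mulVec_transpose_eq_smul hMU k)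
      (hfold k ▸ mulVec_transpose_eq_smul hMU k.rev) (hfold k ▸ mulVec_transpose_ne_zero hUQU k.rev)
  have hsample (k : Fin N) (hk : lam k < 1) : 2 * g ⟨k, hk⟩ = xh k + xh k.rev := by
    rw [hg, hUSL, hQS, submatrix_transpose_mul_submatrix_mulVec,
      ← dotProduct_add_signDiag_mulVec_dotProduct, ← hfold]
    simp only [xh, ← mulVec_mulVec]
    rfl
  have herr : xt - x = U *ᵥ fun k => if lam k < 1 then xh k.rev else -xh k := by
    have hcoeff : (fun k => if lam k < 1 then xh k.rev else -xh k) =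
        (fun k => if h : lam k < 1 then ((2 : ℝ) • g) ⟨k, h⟩ else 0) - xh := by
      ext k
      by_cases hk : lam k < 1
      · rw [Pi.sub_apply, dif_pos hk, if_pos hk, Pi.smul_apply, smul_eq_mul, hsample k hk]
        ring
      · simp [hk]
    rw [hcoeff, mulVec_sub, ← submatrix_id_val_mulVec, ← hUVL, mulVec_mulVec,
      mul_eq_one_comm.mp hUQU, one_mulVec, hxt, smul_mulVec, ← mulVec_mulVec, mulVec_smul]
  rw [herr, mulVec_dotProduct_mulVec_mulVec hUQU, dotProduct,
    ← sum_ite_lt_one_comp_involutive Fin.rev_involutive hrev (xh · ^ 2)]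
  refine sum_congr rfl fun k _ => ?_
  split_ifs <;> ring

/-- Theorem 1: the Q-norm reconstruction error of the spectral-folding
bandlimited interpolation x̃ = 2 U_{VL} U_{SL}ᵀ Q_S x_S satisfies
‖x̃ − x‖²_Q = 2‖Δx̂_h‖²₂ + ‖Δx̂_m‖²₂, where Δx̂_h and Δx̂_m are the high- and
middle-frequency GFT coefficients of x. -/
theorem sf_reconstruction_error
    {N : ℕ} (hN : 1 ≤ N)
    (M : Matrix (Fin N) (Fin N) ℝ) (hM : M.PosSemidef)
    (S : Finset (Fin N))
    (J : Matrix (Fin N) (Fin N) ℝ)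
    (hJ : J = Matrix.diagonal (fun i => if i ∈ S then (1 : ℝ) else -1))
    (Q : Matrix (Fin N) (Fin N) ℝ)
    (hQ : ∀ i j, Q i j =
      if (i ∈ S ∧ j ∈ S) ∨ (i ∉ S ∧ j ∉ S) then M i j else 0)
    (hQpd : Q.PosDef)
    (lam : Fin N → ℝ) (hlam : Monotone lam)
    (U : Matrix (Fin N) (Fin N) ℝ)
    (hUQU : Uᵀ * Q * U = 1)
    (hMU : M * U = Q * U * Matrix.diagonal lam)
    (hfold : ∀ k : Fin N, (fun i => U i k.rev) = J.mulVec (fun i => U i k))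
    (hcardL : Fintype.card {k : Fin N // lam k < 1} =
      Fintype.card {i : Fin N // i ∈ S})
    (hcardH : Fintype.card {k : Fin N // 1 < lam k} =
      Fintype.card {i : Fin N // i ∈ S})
    (QS : Matrix {i : Fin N // i ∈ S} {i : Fin N // i ∈ S} ℝ)
    (hQS : QS = M.submatrix Subtype.val Subtype.val)
    (UVL : Matrix (Fin N) {k : Fin N // lam k < 1} ℝ)
    (hUVL : UVL = U.submatrix id Subtype.val)
    (USL : Matrix {i : Fin N // i ∈ S} {k : Fin N // lam k < 1} ℝ)
    (hUSL : USL = U.submatrix Subtype.val Subtype.val)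
    (x : Fin N → ℝ) (xt : Fin N → ℝ)
    (hxt : xt = ((2 : ℝ) • (UVL * (USLᵀ * QS))).mulVec
      (fun j : {i : Fin N // i ∈ S} => x j.val)) :
    (xt - x) ⬝ᵥ Q.mulVec (xt - x) =
      2 * (∑ k ∈ Finset.univ.filter (fun k : Fin N => 1 < lam k),
            ((Uᵀ * Q).mulVec x k) ^ 2) +
        ∑ k ∈ Finset.univ.filter (fun k : Fin N => lam k = 1),
          ((Uᵀ * Q).mulVec x k) ^ 2 :=
  sf_reconstruction_error_general M S J hJ Q hQ lam U hUQU hMU hfold QS hQS UVL hUVL USL hUSL x xt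
    hxt
end

section
/- Under the spectral-folding setup with |L| = |S| = s ≤ |Sᶜ| and Q_S = M_{SS}, Q_{Sᶜ} = M_{SᶜSᶜ} positive definite, the s nonzero singular values of the normalized cross block Q_S^{−1/2} M_{SSᶜ} Q_{Sᶜ}^{−1/2} are exactly 1 − λ_k for k ∈ L (counted with multiplicity); in particular, its smallest nonzero (s-th largest) singular value equals 1 − λ_s, where λ_s is the largest generalized eigenvalue of (M, Q) that is smaller than 1. -/
open Matrix Polynomial

/-- The positive semidefinite square root of a positive semidefinite matrix
(the definition of `Matrix.PosSemidef.sqrt` in the older Mathlib). -/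
noncomputable def Matrix.PosSemidef.sqrt {n : Type*} [Fintype n]
    [DecidableEq n] {A : Matrix n n ℝ} (hA : A.PosSemidef) : Matrix n n ℝ :=
  hA.1.eigenvectorUnitary.1 * diagonal ((RCLike.ofReal : ℝ → ℝ) ∘ Real.sqrt ∘ hA.1.eigenvalues) *
  (star hA.1.eigenvectorUnitary : Matrix n n ℝ)

/-!
Let `G = diag(Q_S^{1/2}, Q_{Sᶜ}^{1/2})`, so that `G² = Q`. Then `V = G U` is orthogonal and
`K = G⁻¹ (M - Q) G⁻¹ = [[0, A], [Aᵀ, 0]]` satisfies `K V = V diag(λ - 1)`; hence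
`K² = diag(A Aᵀ, Aᵀ A)` gives `χ(A Aᵀ) χ(Aᵀ A) = ∏ₖ (X - (λₖ - 1)²)`.
Since `J M J = 2Q - M`, the folding `u_{N+1-k} = J u_k` forces `λ_{N+1-k} = 2 - λₖ`, so this
product is `q² X^c` with `q = ∏_{k ∈ L} (X - (1 - λₖ)²)` and `c = #{k | λₖ = 1} = N - 2s`.
Together with `X^{|Sᶜ|} χ(A Aᵀ) = X^{|S|} χ(Aᵀ A)` this gives `χ(A Aᵀ)² = q²`, and both are
monic. Finally, monotonicity of `λ` makes `L` the first `s` indices.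
-/

namespace Matrix

section PosSemidefSqrt

variable {n : Type*} [Fintype n] [DecidableEq n] {A : Matrix n n ℝ}

theorem PosSemidef.sqrt_mul_self (hA : A.PosSemidef) : hA.sqrt * hA.sqrt = A := by
  have hu : (star hA.1.eigenvectorUnitary : Matrix n n ℝ) * hA.1.eigenvectorUnitary.1 = 1 :=
    Unitary.coe_star_mul_self _
  have hspec := hA.1.spectral_theorem
  rw [Unitary.conjStarAlgAut_apply] at hspec
  conv_rhs => rw [hspec]
  simp only [sqrt, Matrix.mul_assoc]
  rw [← Matrix.mul_assoc (star _) _ (diagonal _ * _), hu, Matrix.one_mul,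
    ← Matrix.mul_assoc (diagonal _), diagonal_mul_diagonal]
  congr 3
  funext i
  simp [Real.mul_self_sqrt (hA.eigenvalues_nonneg i)]

theorem PosSemidef.transpose_sqrt (hA : A.PosSemidef) : hA.sqrtᵀ = hA.sqrt := by
  simp [sqrt, transpose_mul, Matrix.mul_assoc, star_eq_conjTranspose]

theorem PosDef.isUnit_det_sqrt (hA : A.PosDef) : IsUnit hA.posSemidef.sqrt.det := by
  have h := congrArg det hA.posSemidef.sqrt_mul_self
  rw [det_mul] at h
  exact isUnit_iff_ne_zero.mpr fun h0 => hA.det_pos.ne' (by rw [← h, h0, zero_mul])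

end PosSemidefSqrt

section Charpoly

variable {R : Type*} [CommRing R] {m n ι κ : Type*} [Fintype m] [Fintype n] [Fintype ι]
  [Fintype κ] [DecidableEq m] [DecidableEq n] [DecidableEq ι] [DecidableEq κ]

theorem charpoly_eq_prod_of_mul_eq_mul_diagonal {K : Matrix κ κ R}
    {V : Matrix κ ι R} {d : ι → R} (hcard : Fintype.card κ = Fintype.card ι)
    (hV : Vᵀ * V = 1) (hKV : K * V = V * diagonal d) :
    K.charpoly = ∏ i, (X - C (d i)) := by
  have hK : K = V * (diagonal d * Vᵀ) := by
    rw [← Matrix.mul_assoc, ← hKV, Matrix.mul_assoc,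
      (mul_eq_one_comm_of_card_eq _ _ _ hcard.symm).mp hV, Matrix.mul_one]
  have h := charpoly_mul_comm' V (diagonal d * Vᵀ)
  rw [← hK, Matrix.mul_assoc, hV, Matrix.mul_one, charpoly_diagonal, hcard] at h
  exact (isRegular_X_pow _).left h

theorem charpoly_mul_transpose_mul_charpoly_transpose_mul (A : Matrix m n R)
    {V : Matrix (m ⊕ n) ι R} {d : ι → R} (hcard : Fintype.card (m ⊕ n) = Fintype.card ι)
    (hV : Vᵀ * V = 1) (hKV : fromBlocks 0 A Aᵀ 0 * V = V * diagonal d) :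
    (A * Aᵀ).charpoly * (Aᵀ * A).charpoly = ∏ i, (X - C (d i ^ 2)) := by
  have hsq : fromBlocks 0 A Aᵀ 0 * fromBlocks 0 A Aᵀ 0 = fromBlocks (A * Aᵀ) 0 0 (Aᵀ * A) := by
    simp [fromBlocks_multiply]
  have hKV2 : fromBlocks (A * Aᵀ) 0 0 (Aᵀ * A) * V = V * diagonal (fun i => d i ^ 2) := by
    rw [← hsq, Matrix.mul_assoc, hKV, ← Matrix.mul_assoc, hKV, Matrix.mul_assoc,
      diagonal_mul_diagonal]
    simp only [sq]
  rw [← charpoly_fromBlocks_zero₁₂]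
  exact charpoly_eq_prod_of_mul_eq_mul_diagonal hcard hV hKV2

theorem charpoly_mul_eq_of_charpoly_mul_mul_charpoly_mul_eq [IsDomain R] [CharZero R]
    (A : Matrix m n R) (B : Matrix n m R) {q : R[X]} (hq : q.Monic) {c : ℕ}
    (hcard : Fintype.card n = Fintype.card m + c)
    (h : (A * B).charpoly * (B * A).charpoly = q ^ 2 * X ^ c) :
    (A * B).charpoly = q := by
  have hsq : (A * B).charpoly ^ 2 * X ^ Fintype.card n = q ^ 2 * X ^ Fintype.card n := by
    calc (A * B).charpoly ^ 2 * X ^ Fintype.card n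
        = (A * B).charpoly * (X ^ Fintype.card m * (B * A).charpoly) := by
          rw [← charpoly_mul_comm']; ring
      _ = q ^ 2 * X ^ Fintype.card n := by
          rw [mul_left_comm, h, hcard, pow_add]; ring
  rcases sq_eq_sq_iff_eq_or_eq_neg.mp ((isRegular_X_pow _).right hsq) with h | h
  · exact h
  · have := (charpoly_monic (A * B)).leadingCoeff
    rw [h, leadingCoeff_neg, hq.leadingCoeff] at this
    norm_num at this

end Charpoly

end Matrix

section FoldedSpectrum

open Finset

@[to_additive]
theorem Finset.prod_univ_eq_prod_lt_mul_prod_gt_mul_prod_eq {ι α M : Type*} [Fintype ι]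
    [LinearOrder α] [CommMonoid M] (F : ι → M) (f : ι → α) (c : α) :
    ∏ k, F k = (∏ k with f k < c, F k) * (∏ k with c < f k, F k) * ∏ k with f k = c, F k := by
  rw [← prod_filter_mul_prod_filter_not univ (f · < c), mul_assoc,
    ← prod_filter_mul_prod_filter_not (univ.filter fun k => ¬ f k < c) (c < f ·),
    filter_filter, filter_filter]
  congr 3
  · exact filter_congr fun k _ => ⟨And.right, fun h => ⟨h.le.not_gt, h⟩⟩
  · exact filter_congr fun k _ => by rw [not_lt, not_lt, le_antisymm_iff, and_comm]

variable {ι : Type*} [Fintype ι] [DecidableEq ι] {f : ι → ℝ} {σ : ι → ι}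

theorem image_filter_lt_one_of_involutive (hσ : σ.Involutive) (hf : ∀ k, f (σ k) = 2 - f k) :
    image σ {k | f k < 1} = ({k | 1 < f k} : Finset ι) := by
  ext k
  simp only [mem_image, mem_filter, mem_univ, true_and]
  constructor
  · rintro ⟨j, hj, rfl⟩
    linarith [hf j]
  · exact fun hk => ⟨σ k, by linarith [hf k], hσ k⟩

theorem card_eq_two_mul_card_filter_lt_add_of_involutive (hσ : σ.Involutive)
    (hf : ∀ k, f (σ k) = 2 - f k) :
    Fintype.card ι = 2 * #{k | f k < 1} + #{k | f k = 1} := by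
  have h := sum_univ_eq_sum_lt_add_sum_gt_add_sum_eq (fun _ => 1) f 1
  simp only [sum_const, smul_eq_mul, mul_one, card_univ] at h
  rw [h, ← image_filter_lt_one_of_involutive hσ hf, card_image_of_injective _ hσ.injective]
  ring

theorem prod_X_sub_C_sq_eq_of_involutive (hσ : σ.Involutive) (hf : ∀ k, f (σ k) = 2 - f k) :
    ∏ k, (X - C ((f k - 1) ^ 2)) =
      (∏ k with f k < 1, (X - C ((1 - f k) ^ 2))) ^ 2 * X ^ #{k | f k = 1} := by
  have hlt : ∏ k with f k < 1, (X - C ((f k - 1) ^ 2)) =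
      ∏ k with f k < 1, (X - C ((1 - f k) ^ 2)) :=
    prod_congr rfl fun k _ => by ring_nf
  have hgt : ∏ k with 1 < f k, (X - C ((f k - 1) ^ 2)) =
      ∏ k with f k < 1, (X - C ((1 - f k) ^ 2)) := by
    rw [← image_filter_lt_one_of_involutive hσ hf, prod_image hσ.injective.injOn]
    exact prod_congr rfl fun k _ => by rw [hf]; ring_nf
  have heq : ∏ k with f k = 1, (X - C ((f k - 1) ^ 2)) = X ^ #{k | f k = 1} := by
    rw [prod_congr rfl fun k hk => by rw [(mem_filter.mp hk).2], prod_const]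
    simp
  rw [prod_univ_eq_prod_lt_mul_prod_gt_mul_prod_eq _ f 1, hlt, hgt, heq, sq]

end FoldedSpectrum

theorem Monotone.lt_iff_val_lt_of_card {α : Type*} [LinearOrder α] {N s : ℕ} {f : Fin N → α}
    (hf : Monotone f) {c : α} (hcard : Fintype.card {k // f k < c} = s) (k : Fin N) :
    f k < c ↔ (k : ℕ) < s := by
  rw [Fintype.card_subtype] at hcard
  constructor
  · intro hk
    have hsub : Finset.Iic k ⊆ ({j | f j < c} : Finset (Fin N)) := fun j hj =>
      Finset.mem_filter.mpr ⟨Finset.mem_univ j, (hf (Finset.mem_Iic.mp hj)).trans_lt hk⟩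
    have := Finset.card_le_card hsub
    rw [Fin.card_Iic, hcard] at this
    omega
  · intro hk
    by_contra hck
    have hsub : ({j | f j < c} : Finset (Fin N)) ⊆ Finset.Iio k := fun j hj =>
      Finset.mem_Iio.mpr (lt_of_not_ge fun hkj =>
        hck ((hf hkj).trans_lt (Finset.mem_filter.mp hj).2))
    have := Finset.card_le_card hsub
    rw [Fin.card_Iio, hcard] at this
    omega

theorem Monotone.isLeast_sub_of_card {N s : ℕ} {f : Fin N → ℝ} (hf : Monotone f) {c : ℝ}
    (hcard : Fintype.card {k // f k < c} = s) (hs : 0 < s) (hsN : s - 1 < N) :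
    IsLeast {x | ∃ k, f k < c ∧ x = c - f k} (c - f ⟨s - 1, hsN⟩) := by
  have hlt := hf.lt_iff_val_lt_of_card hcard
  refine ⟨⟨_, (hlt _).mpr (by simp only; omega), rfl⟩, ?_⟩
  rintro x ⟨k, hk, rfl⟩
  have : f k ≤ f ⟨s - 1, hsN⟩ := hf (Fin.mk_le_mk.mpr ?_)
  · linarith
  · have := (hlt k).mp hk
    omega

namespace Matrix

variable {m n ι κ : Type*}

section GeneralizedEigenbasis

variable [Fintype ι] [DecidableEq κ] {M Q : Matrix ι ι ℝ} {d : κ → ℝ}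

theorem diagonal_eq_of_transpose_mul_mul_eq_one [Fintype κ] {R : Matrix ι κ ℝ} {a b : κ → ℝ}
    (hR : Rᵀ * Q * R = 1) (ha : M * R = Q * R * diagonal a) (hb : M * R = Q * R * diagonal b) :
    a = b := by
  have key : ∀ c, M * R = Q * R * diagonal c → diagonal c = Rᵀ * (M * R) := fun c hc => by
    rw [hc, ← Matrix.mul_assoc, ← Matrix.mul_assoc, hR, Matrix.one_mul]
  exact diagonal_injective ((key a ha).trans (key b hb).symm)

variable {G : Matrix ι ι ℝ} {U : Matrix ι κ ℝ}

theorem transpose_mul_mul_eq_one_of_mul_self_eq (hG : Gᵀ = G) (hGG : G * G = Q)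
    (hU : Uᵀ * Q * U = 1) : (G * U)ᵀ * (G * U) = 1 := by
  rw [transpose_mul, hG, ← hU, ← hGG]
  simp only [Matrix.mul_assoc]

theorem inv_mul_sub_mul_inv_mul_eq [DecidableEq ι] [Fintype κ] (hGG : G * G = Q) (hG : IsUnit G.det)
    (hMU : M * U = Q * U * diagonal d) :
    G⁻¹ * (M - Q) * G⁻¹ * (G * U) = G * U * diagonal (fun k => d k - 1) := by
  have hdiag : diagonal (fun k => d k - 1) = diagonal d - 1 := by
    rw [← diagonal_one, diagonal_sub]
  calc G⁻¹ * (M - Q) * G⁻¹ * (G * U) = G⁻¹ * (M * U - Q * U) := by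
        rw [Matrix.mul_assoc, nonsing_inv_mul_cancel_left _ _ hG, Matrix.mul_assoc,
          Matrix.sub_mul]
    _ = G⁻¹ * Q * U * (diagonal d - 1) := by
        rw [hMU]
        simp only [Matrix.mul_assoc, Matrix.mul_sub, Matrix.mul_one]
    _ = G * U * diagonal (fun k => d k - 1) := by
        rw [← hGG, nonsing_inv_mul_cancel_left _ _ hG, hdiag]

end GeneralizedEigenbasis

section Signature

variable [DecidableEq ι]

def signature (S : Finset ι) : Matrix ι ι ℝ :=
  diagonal fun i => if i ∈ S then 1 else -1

variable [Fintype ι] {S : Finset ι}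

theorem signature_mul_signature : signature S * signature S = 1 := by
  rw [signature, diagonal_mul_diagonal, ← diagonal_one]
  congr 1
  ext i
  split_ifs <;> norm_num

theorem signature_mul_mul_signature_apply (X : Matrix ι ι ℝ) (i j : ι) :
    (signature S * X * signature S) i j =
      if (i ∈ S ∧ j ∈ S) ∨ (i ∉ S ∧ j ∉ S) then X i j else -X i j := by
  rw [signature, mul_diagonal, diagonal_mul]
  by_cases hi : i ∈ S <;> by_cases hj : j ∈ S <;> simp [hi, hj]

variable {M Q : Matrix ι ι ℝ}

theorem signature_mul_mul_signature_of_eq_blockDiagonal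
    (hQ : ∀ i j, Q i j = if (i ∈ S ∧ j ∈ S) ∨ (i ∉ S ∧ j ∉ S) then M i j else 0) :
    signature S * Q * signature S = Q := by
  ext i j
  rw [signature_mul_mul_signature_apply, hQ]
  split_ifs <;> simp

theorem signature_mul_mul_signature_eq_two_smul_sub
    (hQ : ∀ i j, Q i j = if (i ∈ S ∧ j ∈ S) ∨ (i ∉ S ∧ j ∉ S) then M i j else 0) :
    signature S * M * signature S = (2 : ℝ) • Q - M := by
  ext i j
  rw [signature_mul_mul_signature_apply, sub_apply, smul_apply, smul_eq_mul, hQ]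
  split_ifs <;> ring

end Signature

section Reflection

variable [Fintype ι] [DecidableEq ι] [Fintype κ] [DecidableEq κ]
variable {J M Q : Matrix ι ι ℝ} {U : Matrix ι κ ℝ} {d : κ → ℝ}

theorem mul_reflect_eq_mul_diagonal (hJJ : J * J = 1) (hJQ : J * Q * J = Q)
    (hJM : J * M * J = (2 : ℝ) • Q - M) (hMU : M * U = Q * U * diagonal d) :
    M * (J * U) = Q * (J * U) * diagonal (fun k => 2 - d k) := by
  have hQJ : Q * J = J * Q := by
    calc Q * J = J * Q * J * J := by rw [hJQ]
      _ = J * Q := by rw [Matrix.mul_assoc, hJJ, Matrix.mul_one]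
  have hd : diagonal (fun k => 2 - d k) = (2 : ℝ) • (1 : Matrix κ κ ℝ) - diagonal d := by
    ext i j
    by_cases h : i = j <;> simp [h]
  calc M * (J * U) = J * (J * M * J) * U := by
        simp only [← Matrix.mul_assoc, hJJ, Matrix.one_mul]
    _ = (2 : ℝ) • (J * Q * U) - J * (M * U) := by
        rw [hJM, Matrix.mul_sub, Matrix.sub_mul, Matrix.mul_smul, Matrix.smul_mul,
          Matrix.mul_assoc J M]
    _ = Q * (J * U) * diagonal (fun k => 2 - d k) := by
        rw [hMU, hd, Matrix.mul_sub, Matrix.mul_smul, Matrix.mul_one,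
          ← Matrix.mul_assoc J (Q * U), ← Matrix.mul_assoc J Q, ← hQJ]
        simp only [Matrix.mul_assoc]

theorem eigenvalue_perm_eq_two_sub {σ : κ ≃ κ} (hJJ : J * J = 1) (hJQ : J * Q * J = Q)
    (hJM : J * M * J = (2 : ℝ) • Q - M) (hUQU : Uᵀ * Q * U = 1)
    (hMU : M * U = Q * U * diagonal d)
    (hfold : ∀ k, (fun i => U i (σ k)) = J *ᵥ (fun i => U i k)) (k : κ) :
    d (σ k) = 2 - d k := by
  have hR : U.submatrix id σ = J * U := by
    ext i k
    exact congrFun (hfold k) i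
  have hRQR : (U.submatrix id σ)ᵀ * Q * U.submatrix id σ = 1 := by
    rw [transpose_submatrix, ← submatrix_id_id Q,
      ← submatrix_mul _ _ σ id id Function.bijective_id,
      ← submatrix_mul _ _ σ id σ Function.bijective_id, hUQU, submatrix_one_equiv]
  have hMR : M * U.submatrix id σ = Q * U.submatrix id σ * diagonal (d ∘ σ) := by
    ext i k
    have := congrFun (congrFun hMU i) (σ k)
    rw [mul_diagonal] at this ⊢
    simpa only [mul_apply, submatrix_apply, id, Function.comp_apply] using this
  have hMR' : M * U.submatrix id σ = Q * U.submatrix id σ * diagonal (fun k => 2 - d k) := by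
    rw [hR]
    exact mul_reflect_eq_mul_diagonal hJJ hJQ hJM hMU
  exact congrFun (diagonal_eq_of_transpose_mul_mul_eq_one hRQR hMR hMR') k

end Reflection

section Blocks

variable [DecidableEq ι] {α : Type*} (S : Finset ι)

theorem submatrix_sumCompl_of_transpose_eq {M : Matrix ι ι α} (hM : Mᵀ = M) :
    M.submatrix (Equiv.sumCompl (· ∈ S)) (Equiv.sumCompl (· ∈ S)) =
      fromBlocks (M.submatrix Subtype.val Subtype.val)
        (M.submatrix (Subtype.val : {i // i ∈ S} → ι) (Subtype.val : {i // i ∉ S} → ι))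
        (M.submatrix (Subtype.val : {i // i ∈ S} → ι) (Subtype.val : {i // i ∉ S} → ι))ᵀ
        (M.submatrix Subtype.val Subtype.val) := by
  ext (i | i) (j | j)
  · rfl
  · rfl
  · exact congrFun (congrFun hM.symm _) _
  · rfl

theorem submatrix_sumCompl_of_eq_blockDiagonal [Zero α] {M Q : Matrix ι ι α}
    (hQ : ∀ i j, Q i j = if (i ∈ S ∧ j ∈ S) ∨ (i ∉ S ∧ j ∉ S) then M i j else 0) :
    Q.submatrix (Equiv.sumCompl (· ∈ S)) (Equiv.sumCompl (· ∈ S)) =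
      fromBlocks (M.submatrix Subtype.val Subtype.val) 0 0
        (M.submatrix Subtype.val Subtype.val) := by
  ext (i | i) (j | j) <;> simp [hQ, i.2, j.2]

variable [Fintype m] [Fintype n] [DecidableEq m] [DecidableEq n]

theorem inv_fromBlocks_diag_mul_mul_inv [CommRing α] {P : Matrix m m α} {R : Matrix n n α}
    (hP : Pᵀ = P) (hR : Rᵀ = R) (hPR : IsUnit P ↔ IsUnit R) (X : Matrix m n α) :
    (fromBlocks P 0 0 R)⁻¹ * fromBlocks 0 X Xᵀ 0 * (fromBlocks P 0 0 R)⁻¹ =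
      fromBlocks 0 (P⁻¹ * X * R⁻¹) (P⁻¹ * X * R⁻¹)ᵀ 0 := by
  rw [inv_fromBlocks_zero₁₂_of_isUnit_iff _ _ _ hPR]
  simp [fromBlocks_multiply, transpose_mul, transpose_nonsing_inv, hP, hR, Matrix.mul_assoc]

theorem exists_orthonormal_offDiag_eigenbasis [Fintype ι] {P : Matrix m m ℝ} {R : Matrix n n ℝ}
    {X : Matrix m n ℝ} {M Q : Matrix ι ι ℝ} {U : Matrix ι ι ℝ} {d : ι → ℝ} (e : m ⊕ n ≃ ι)
    (hP : P.PosDef) (hR : R.PosDef) (hMe : M.submatrix e e = fromBlocks P X Xᵀ R)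
    (hQe : Q.submatrix e e = fromBlocks P 0 0 R) (hU : Uᵀ * Q * U = 1)
    (hMU : M * U = Q * U * diagonal d) :
    ∃ V : Matrix (m ⊕ n) ι ℝ, Vᵀ * V = 1 ∧
      fromBlocks 0 (hP.posSemidef.sqrt⁻¹ * X * hR.posSemidef.sqrt⁻¹)
        (hP.posSemidef.sqrt⁻¹ * X * hR.posSemidef.sqrt⁻¹)ᵀ 0 * V =
        V * diagonal (fun k => d k - 1) := by
  have hU' : (U.submatrix e id)ᵀ * fromBlocks P 0 0 R * U.submatrix e id = 1 := by
    rw [← hQe, transpose_submatrix]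
    simpa using hU
  have hMU' : fromBlocks P X Xᵀ R * U.submatrix e id =
      fromBlocks P 0 0 R * U.submatrix e id * diagonal d := by
    have h := congrArg (submatrix · e id) hMU
    rw [submatrix_mul (Q * U) _ e id id Function.bijective_id, submatrix_id_id] at h
    rw [← hMe, ← hQe]
    simpa using h
  set G := fromBlocks hP.posSemidef.sqrt 0 0 hR.posSemidef.sqrt
  have hG : Gᵀ = G := by
    simp [G, fromBlocks_transpose, PosSemidef.transpose_sqrt]
  have hGG : G * G = fromBlocks P 0 0 R := by
    simp [G, fromBlocks_multiply, PosSemidef.sqrt_mul_self]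
  have hGu : IsUnit G.det := by
    rw [det_fromBlocks_zero₂₁]
    exact hP.isUnit_det_sqrt.mul hR.isUnit_det_sqrt
  have hoff : fromBlocks P X Xᵀ R - fromBlocks P 0 0 R = fromBlocks 0 X Xᵀ 0 := by
    ext (i | i) (j | j) <;> simp
  refine ⟨G * U.submatrix e id, transpose_mul_mul_eq_one_of_mul_self_eq hG hGG hU', ?_⟩
  rw [← inv_fromBlocks_diag_mul_mul_inv (PosSemidef.transpose_sqrt _)
    (PosSemidef.transpose_sqrt _) (iff_of_true ((isUnit_iff_isUnit_det _).mpr hP.isUnit_det_sqrt)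
      ((isUnit_iff_isUnit_det _).mpr hR.isUnit_det_sqrt)), ← hoff]
  exact inv_mul_sub_mul_inv_mul_eq hGG hGu hMU'

end Blocks

end Matrix

/-- Under the spectral-folding setup with |L| = |S| = s ≤ |Sᶜ|, the s nonzero
singular values of A = Q_S^{−1/2} M_{SSᶜ} Q_{Sᶜ}^{−1/2} are exactly 1 − λ_k for
k ∈ L, counted with multiplicity (the characteristic polynomial of A Aᵀ is
∏_{k ∈ L} (X − (1 − λ_k)²)); in particular the smallest of the values 1 − λ_k,
k ∈ L, i.e. the s-th largest singular value, equals 1 − λ_s. -/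
theorem singular_values_of_normalized_cross_block
    {N s : ℕ} (hs : 0 < s) (hsN : s ≤ N)
    (M : Matrix (Fin N) (Fin N) ℝ) (hM : M.PosSemidef)
    (S : Finset (Fin N)) (hsS : s = S.card)
    (J : Matrix (Fin N) (Fin N) ℝ)
    (hJ : J = Matrix.diagonal (fun i => if i ∈ S then (1 : ℝ) else -1))
    (Q : Matrix (Fin N) (Fin N) ℝ)
    (hQ : ∀ i j, Q i j =
      if (i ∈ S ∧ j ∈ S) ∨ (i ∉ S ∧ j ∉ S) then M i j else 0)
    (hQpd : Q.PosDef)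
    (lam : Fin N → ℝ) (hlam : Monotone lam)
    (U : Matrix (Fin N) (Fin N) ℝ)
    (hUQU : Uᵀ * Q * U = 1)
    (hMU : M * U = Q * U * Matrix.diagonal lam)
    (hfold : ∀ k : Fin N, (fun i => U i k.rev) = J.mulVec (fun i => U i k))
    (hcardL : Fintype.card {k : Fin N // lam k < 1} = s)
    (QS : Matrix {i : Fin N // i ∈ S} {i : Fin N // i ∈ S} ℝ)
    (hQS : QS = M.submatrix Subtype.val Subtype.val)
    (hQSpd : QS.PosSemidef)
    (QSc : Matrix {i : Fin N // i ∉ S} {i : Fin N // i ∉ S} ℝ)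
    (hQSc : QSc = M.submatrix Subtype.val Subtype.val)
    (hQScpd : QSc.PosSemidef)
    (A : Matrix {i : Fin N // i ∈ S} {i : Fin N // i ∉ S} ℝ)
    (hA : A = hQSpd.sqrt⁻¹ *
      M.submatrix (Subtype.val : {i : Fin N // i ∈ S} → Fin N)
        (Subtype.val : {i : Fin N // i ∉ S} → Fin N) * hQScpd.sqrt⁻¹) :
    (A * Aᵀ).charpoly =
        ∏ k ∈ Finset.univ.filter (fun k : Fin N => lam k < 1),
          (X - C ((1 - lam k) ^ 2)) ∧
      IsLeast {x : ℝ | ∃ k : Fin N, lam k < 1 ∧ x = 1 - lam k}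
        (1 - lam ⟨s - 1, by omega⟩) := by
  have hMsym : Mᵀ = M := (conjTranspose_eq_transpose_of_trivial M).symm.trans hM.1
  subst hJ hQS hQSc hA
  have hQe := submatrix_sumCompl_of_eq_blockDiagonal S hQ
  have hQblocks : (fromBlocks (M.submatrix Subtype.val Subtype.val) 0 0
      (M.submatrix Subtype.val Subtype.val)).PosDef :=
    hQe ▸ hQpd.submatrix (Equiv.sumCompl (· ∈ S)).injective
  obtain ⟨V, hV, hKV⟩ := exists_orthonormal_offDiag_eigenbasis (Equiv.sumCompl (· ∈ S))
    (hQblocks.submatrix Sum.inl_injective) (hQblocks.submatrix Sum.inr_injective)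
    (submatrix_sumCompl_of_transpose_eq S hMsym) hQe hUQU hMU
  have hrev : ∀ k : Fin N, lam k.rev = 2 - lam k :=
    eigenvalue_perm_eq_two_sub (σ := Fin.revPerm) signature_mul_signature
      (signature_mul_mul_signature_of_eq_blockDiagonal hQ)
      (signature_mul_mul_signature_eq_two_smul_sub hQ) hUQU hMU hfold
  have hprod := charpoly_mul_transpose_mul_charpoly_transpose_mul _
    (Fintype.card_congr (Equiv.sumCompl _)) hV hKV
  rw [prod_X_sub_C_sq_eq_of_involutive Fin.rev_involutive hrev] at hprod
  have hcard := card_eq_two_mul_card_filter_lt_add_of_involutive Fin.rev_involutive hrev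
  rw [Fintype.card_fin, ← Fintype.card_subtype, hcardL] at hcard
  refine ⟨charpoly_mul_eq_of_charpoly_mul_mul_charpoly_mul_eq _ _
    (monic_prod_of_monic _ _ fun k _ => monic_X_sub_C _) ?_ hprod,
    hlam.isLeast_sub_of_card hcardL hs _⟩
  rw [Fintype.card_subtype_compl, Fintype.card_coe, Fintype.card_fin, ← hsS]
  omega
end

section
/- (Expected reconstruction error) Under the spectral-folding setup with M positive definite and |L| = |H| = |S| = s, let x be a random vector in ℝᴺ with mean zero and covariance M⁻¹ (e.g., Gaussian with covariance M⁻¹), and let x̃ = 2 U_{VL} U_{SL}ᵀ Q_S x_S. Then the expected squared Q-norm reconstruction error equals E[‖x̃ − x‖²_Q] = 2 Σ_{k∈H} (1/λ_k) + (N − 2s). -/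
/-!
Write `x̃ = A x` with `A = 2 U P_L Uᵀ P_S M P_S`, where `P_S`, `P_L` are the diagonal 0/1
projections onto `S` and `L`. Since `Q` is block diagonal, `P_S M P_S = P_S Q = (Q + J Q) / 2`,
and the folding `J U = U R` (`R` the reversal permutation matrix) turns `Uᵀ Q U = 1` into
`2 Uᵀ P_S Q U = 1 + R`. As `λ` is sorted and `|L| = |H|`, reversal exchanges `L` and `H`, so `A`
sends `u_k` to `u_k` for `k ∈ L`, to `u_{N+1-k}` for `k ∈ H`, and to `0` for `k ∈ Mid`.
With `M⁻¹ = U Λ⁻¹ Uᵀ`, the expected error `tr((A - 1)ᵀ Q (A - 1) M⁻¹)` is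
`∑ₖ ‖(A - 1) u_k‖²_Q / λ_k`, and these squared `Q`-norms are `0`, `2` and `1` on `L`, `H`, `Mid`.
-/

open Matrix MeasureTheory

namespace Matrix

variable {m n : Type*} [DecidableEq n]

def diagProj (p : n → Prop) [DecidablePred p] : Matrix n n ℝ :=
  diagonal fun i => if p i then 1 else 0

def subtypeIncl (p : n → Prop) : Matrix n (Subtype p) ℝ :=
  (1 : Matrix n n ℝ).submatrix id Subtype.val

section diagProj

variable (p q : n → Prop) [DecidablePred p] [DecidablePred q]

@[simp] theorem diagProj_transpose : (diagProj p)ᵀ = diagProj p := diagonal_transpose _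

theorem one_sub_diagProj : 1 - diagProj p = diagProj fun i => ¬p i := by
  ext i j
  rcases eq_or_ne i j with rfl | hij
  · by_cases hp : p i <;> simp [diagProj, hp]
  · simp [diagProj, hij]

theorem two_smul_diagProj_mem (S : Finset n) :
    (2 : ℝ) • diagProj (· ∈ S) = 1 + diagonal fun i => if i ∈ S then 1 else -1 := by
  rw [diagProj, ← diagonal_one, ← diagonal_smul, diagonal_add]
  congr 1
  ext i
  by_cases hi : i ∈ S <;> norm_num [hi]

variable [Fintype n]

theorem diagProj_mul_diagProj : diagProj p * diagProj q = diagProj fun i => p i ∧ q i := by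
  simp only [diagProj, diagonal_mul_diagonal, ite_zero_mul_ite_zero, mul_one]

theorem diagProj_mul_self : diagProj p * diagProj p = diagProj p := by
  simp [diagProj]

theorem diagProj_mul_permMatrix {σ : Equiv.Perm n} (h : ∀ i, p i ↔ q (σ i)) :
    diagProj p * σ.permMatrix ℝ = σ.permMatrix ℝ * diagProj q := by
  ext i j
  simp only [diagProj, diagonal_mul, mul_diagonal, PEquiv.toMatrix_apply, Equiv.toPEquiv_apply,
    Option.mem_def, Option.some.injEq]
  by_cases hij : σ i = j
  · subst hij; simp [h]
  · simp [hij]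

theorem transpose_mul_self_of_diagProj_mul_permMatrix {σ : Equiv.Perm n}
    (h : diagProj p * σ.permMatrix ℝ = σ.permMatrix ℝ * diagProj q) :
    (σ.permMatrix ℝ * diagProj q - diagProj (fun i => ¬p i))ᵀ *
        (σ.permMatrix ℝ * diagProj q - diagProj (fun i => ¬p i)) =
      diagProj q + diagProj fun i => ¬p i := by
  have hperm : (σ.permMatrix ℝ)ᵀ * σ.permMatrix ℝ = 1 := by
    rw [transpose_permMatrix, ← permMatrix_mul, mul_inv_cancel, permMatrix_one]
  have hcross : diagProj (fun i => ¬p i) * (σ.permMatrix ℝ * diagProj q) = 0 := by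
    rw [← h, ← Matrix.mul_assoc, diagProj_mul_diagProj]
    simp [diagProj]
  have hcross' : diagProj q * (σ.permMatrix ℝ)ᵀ * diagProj (fun i => ¬p i) = 0 := by
    simpa [Matrix.transpose_mul, Matrix.mul_assoc] using congrArg transpose hcross
  rw [transpose_sub, transpose_mul, diagProj_transpose, diagProj_transpose, sub_mul, mul_sub,
    mul_sub, hcross, ← Matrix.mul_assoc, hcross', Matrix.mul_assoc (diagProj q), hperm,
    Matrix.mul_one, diagProj_mul_self, diagProj_mul_self, sub_zero, zero_sub, sub_neg_eq_add]

end diagProj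

section subtypeIncl

theorem subtypeIncl_mul_transpose (p : n → Prop) [DecidablePred p] [Fintype (Subtype p)] :
    subtypeIncl p * (subtypeIncl p)ᵀ = diagProj p := by
  ext i j
  simp only [subtypeIncl, diagProj, mul_apply, transpose_apply, submatrix_apply, id, one_apply,
    diagonal_apply]
  by_cases hp : p i
  · rw [Fintype.sum_eq_single ⟨i, hp⟩ fun k hk => by simp [Ne.symm (Subtype.coe_ne_coe.2 hk)]]
    simp [hp, eq_comm]
  · rw [Fintype.sum_eq_zero _ fun k => by simp [show i ≠ k from fun h => hp (h ▸ k.2)]]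
    simp [hp]

variable [Fintype n]

theorem submatrix_id_val_eq_mul (p : n → Prop) (X : Matrix m n ℝ) :
    X.submatrix id Subtype.val = X * subtypeIncl p := by
  ext i j
  simp [subtypeIncl, mul_apply, one_apply]

theorem submatrix_val_id_eq_mul (p : n → Prop) (X : Matrix n m ℝ) :
    X.submatrix Subtype.val id = (subtypeIncl p)ᵀ * X := by
  ext i j
  simp [subtypeIncl, mul_apply, one_apply]

theorem comp_val_eq_mulVec (p : n → Prop) (v : n → ℝ) :
    (fun j : Subtype p => v j) = (subtypeIncl p)ᵀ *ᵥ v := by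
  ext i
  simp [subtypeIncl, mulVec, dotProduct, one_apply]

theorem submatrix_mul_submatrix_mulVec_comp_val [Fintype m] [DecidableEq m] (U : Matrix m n ℝ)
    (M : Matrix m m ℝ) (p : m → Prop) [DecidablePred p] [Fintype (Subtype p)] (q : n → Prop)
    [DecidablePred q] [Fintype (Subtype q)] (v : m → ℝ) :
    ((U.submatrix id Subtype.val : Matrix m (Subtype q) ℝ) *
        ((U.submatrix Subtype.val Subtype.val : Matrix (Subtype p) (Subtype q) ℝ)ᵀ *
          (M.submatrix Subtype.val Subtype.val : Matrix (Subtype p) (Subtype p) ℝ))) *ᵥ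
        (fun j : Subtype p => v j) =
      (U * diagProj q * Uᵀ * (diagProj p * M * diagProj p)) *ᵥ v := by
  have hU : U.submatrix (Subtype.val : Subtype p → m) (Subtype.val : Subtype q → n) =
      (subtypeIncl p)ᵀ * U * subtypeIncl q := by
    rw [← submatrix_val_id_eq_mul, ← submatrix_id_val_eq_mul]; rfl
  have hM : M.submatrix (Subtype.val : Subtype p → m) (Subtype.val : Subtype p → m) =
      (subtypeIncl p)ᵀ * M * subtypeIncl p := by
    rw [← submatrix_val_id_eq_mul, ← submatrix_id_val_eq_mul]; rfl
  rw [submatrix_id_val_eq_mul q, hU, hM, comp_val_eq_mulVec p, ← subtypeIncl_mul_transpose,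
    ← subtypeIncl_mul_transpose]
  simp only [transpose_mul, transpose_transpose, mulVec_mulVec, Matrix.mul_assoc]

end subtypeIncl

def IsBlockDiagPart (S : Finset n) (M Q : Matrix n n ℝ) : Prop :=
  ∀ i j, Q i j = if (i ∈ S ∧ j ∈ S) ∨ (i ∉ S ∧ j ∉ S) then M i j else 0

namespace IsBlockDiagPart

variable {S : Finset n} {M Q : Matrix n n ℝ}

theorem transpose_eq (hQ : IsBlockDiagPart S M Q) (hM : Mᵀ = M) : Qᵀ = Q := by
  ext i j
  rw [transpose_apply, hQ, hQ, ← transpose_apply M, hM]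
  grind

variable [Fintype n]

theorem signs_mul_comm (hQ : IsBlockDiagPart S M Q) :
    diagonal (fun i => if i ∈ S then 1 else -1) * Q =
      Q * diagonal (fun i => if i ∈ S then 1 else -1) := by
  ext i j
  rw [diagonal_mul, mul_diagonal, hQ]
  by_cases hi : i ∈ S <;> by_cases hj : j ∈ S <;> simp [hi, hj]

theorem diagProj_mul_mul_diagProj (hQ : IsBlockDiagPart S M Q) :
    diagProj (· ∈ S) * M * diagProj (· ∈ S) = diagProj (· ∈ S) * Q := by
  ext i j
  rw [diagProj, diagonal_mul, mul_diagonal, diagonal_mul, hQ]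
  by_cases hi : i ∈ S <;> by_cases hj : j ∈ S <;> simp [hi, hj]

end IsBlockDiagPart

theorem transpose_mul_mul_apply_self [Fintype m] (A B : Matrix m m ℝ) (k : m) :
    (Bᵀ * A * B) k k = Bᵀ k ⬝ᵥ A *ᵥ Bᵀ k := by
  simp only [mul_apply, transpose_apply, dotProduct, mulVec, Finset.sum_mul, Finset.mul_sum]
  rw [Finset.sum_comm]
  exact Finset.sum_congr rfl fun i _ => Finset.sum_congr rfl fun j _ => by ring

end Matrix

theorem Monotone.lt_iff_lt_card {α : Type*} [LinearOrder α] {n : ℕ} {f : Fin n → α}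
    (hf : Monotone f) (c : α) (k : Fin n) :
    f k < c ↔ (k : ℕ) < Fintype.card {j // f j < c} := by
  rw [Fintype.card_subtype]
  constructor
  · intro hk
    have hsub : Finset.Iic k ⊆ Finset.univ.filter fun j => f j < c := fun j hj =>
      Finset.mem_filter.2 ⟨Finset.mem_univ j, (hf (Finset.mem_Iic.1 hj)).trans_lt hk⟩
    simpa using Finset.card_le_card hsub
  · intro hk
    by_contra hck
    have hsub : (Finset.univ.filter fun j => f j < c) ⊆ Finset.Iio k := fun j hj =>
      Finset.mem_Iio.2 (lt_of_not_ge fun hkj =>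
        hck ((hf hkj).trans_lt (Finset.mem_filter.1 hj).2))
    have := Finset.card_le_card hsub
    simp only [Fin.card_Iio] at this
    omega

theorem Monotone.lt_iff_lt_apply_rev {α : Type*} [LinearOrder α] {n : ℕ} {f : Fin n → α}
    (hf : Monotone f) {c : α}
    (hcard : Fintype.card {k // f k < c} = Fintype.card {k // c < f k}) (k : Fin n) :
    f k < c ↔ c < f k.rev := by
  have hdual : Monotone fun k : Fin n => OrderDual.toDual (f k.rev) :=
    (hf.comp_antitone Fin.rev_anti).dual_right
  have hcard' : Fintype.card {k : Fin n // c < f k.rev} = Fintype.card {k // c < f k} :=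
    Fintype.card_congr (Fin.revPerm.subtypeEquiv fun _ => Iff.rfl)
  have hrev := hdual.lt_iff_lt_card (OrderDual.toDual c) k
  simp only [OrderDual.toDual_lt_toDual] at hrev
  rw [hrev, hcard', ← hcard, ← hf.lt_iff_lt_card]

theorem sum_weighted_inv_eq {ι : Type*} [Fintype ι] (f : ι → ℝ) :
    ∑ k, ((if 1 < f k then 1 else 0) + (if ¬f k < 1 then 1 else 0)) * (f k)⁻¹ =
      2 * ∑ k ∈ Finset.univ.filter (fun k => 1 < f k), (f k)⁻¹ +
        ((Fintype.card ι : ℝ) - Fintype.card {k // f k < 1} - Fintype.card {k // 1 < f k}) := by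
  have hpoint : ∀ k, ((if 1 < f k then 1 else 0) + (if ¬f k < 1 then 1 else 0)) * (f k)⁻¹ =
      2 * (if 1 < f k then (f k)⁻¹ else 0) + 1 - (if f k < 1 then 1 else 0) -
        (if 1 < f k then 1 else 0) := fun k => by
    rcases lt_trichotomy (f k) 1 with h | h | h
    · simp [h, h.not_gt]
    · simp [h]
    · simp only [h, h.not_gt, if_true, if_false, not_false_eq_true]; ring
  simp only [hpoint, Finset.sum_sub_distrib, Finset.sum_add_distrib, ← Finset.mul_sum,
    Finset.sum_boole, ← Finset.sum_filter, Fintype.card_subtype]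
  simp only [Finset.sum_const, Finset.card_univ, nsmul_eq_mul, mul_one]
  ring

theorem integral_dotProduct_mulVec_eq_trace {Ω n : Type*} [Fintype n] [MeasurableSpace Ω]
    {μ : Measure Ω} {x : Ω → n → ℝ} {C : Matrix n n ℝ}
    (hint : ∀ i j, Integrable (fun ω => x ω i * x ω j) μ)
    (hcov : ∀ i j, ∫ ω, x ω i * x ω j ∂μ = C i j) (G : Matrix n n ℝ) :
    ∫ ω, x ω ⬝ᵥ G *ᵥ x ω ∂μ = trace (G * Cᵀ) := by
  have hexpand : ∀ ω, x ω ⬝ᵥ G *ᵥ x ω = ∑ i, ∑ j, G i j * (x ω i * x ω j) := fun ω => by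
    simp only [dotProduct, mulVec, Finset.mul_sum]
    exact Finset.sum_congr rfl fun i _ => Finset.sum_congr rfl fun j _ => by ring
  have hint' : ∀ i j, Integrable (fun ω => G i j * (x ω i * x ω j)) μ :=
    fun i j => (hint i j).const_mul _
  simp_rw [hexpand]
  rw [integral_finsetSum _ fun i _ => integrable_finsetSum _ fun j _ => hint' i j]
  simp_rw [integral_finsetSum _ fun j _ => hint' _ j, integral_const_mul, hcov]
  simp [trace, mul_apply]

section GeneralizedEigen

variable {n : Type*} [Fintype n] [DecidableEq n] {M Q U : Matrix n n ℝ} {lam : n → ℝ}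

theorem Matrix.PosDef.pos_of_generalized_eig (hM : M.PosDef) (hUQU : Uᵀ * Q * U = 1)
    (hMU : M * U = Q * U * diagonal lam) (k : n) : 0 < lam k := by
  have hcol : Uᵀ k ≠ 0 := fun h0 => by
    have h1 := transpose_mul_mul_apply_self Q U k
    rw [hUQU, h0, zero_dotProduct, one_apply_eq] at h1
    exact one_ne_zero h1
  have hUMU : Uᵀ * M * U = diagonal lam := by
    rw [Matrix.mul_assoc, hMU, ← Matrix.mul_assoc, ← Matrix.mul_assoc, hUQU, Matrix.one_mul]
  have hval := transpose_mul_mul_apply_self M U k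
  rw [hUMU, diagonal_apply_eq] at hval
  simpa [hval] using hM.dotProduct_mulVec_pos hcol

theorem inv_eq_of_generalized_eig (hQ : Qᵀ = Q) (hUQU : Uᵀ * Q * U = 1)
    (hMU : M * U = Q * U * diagonal lam) (hlam : ∀ k, lam k ≠ 0) :
    M⁻¹ = U * diagonal (fun k => (lam k)⁻¹) * Uᵀ := by
  have hQUU : Q * U * Uᵀ = 1 := by
    have h := congrArg transpose (mul_eq_one_comm.mp hUQU)
    rwa [transpose_mul, transpose_mul, transpose_transpose, hQ, transpose_one] at h
  apply inv_eq_right_inv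
  calc M * (U * diagonal (fun k => (lam k)⁻¹) * Uᵀ)
      = Q * U * (diagonal lam * diagonal (fun k => (lam k)⁻¹)) * Uᵀ := by
        rw [← Matrix.mul_assoc (Q * U), ← hMU]; simp only [Matrix.mul_assoc]
    _ = 1 := by
        rw [diagonal_mul_diagonal]
        simp [hlam, hQUU]

theorem two_smul_transpose_mul_mul_eq {J P R : Matrix n n ℝ} (hUQU : Uᵀ * Q * U = 1)
    (hJQ : J * Q = Q * J) (hJU : J * U = U * R) (hP : (2 : ℝ) • P = 1 + J) :
    (2 : ℝ) • (Uᵀ * (P * Q) * U) = 1 + R := by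
  calc (2 : ℝ) • (Uᵀ * (P * Q) * U) = Uᵀ * ((2 : ℝ) • P * Q) * U := by
        rw [Matrix.smul_mul, Matrix.mul_smul, Matrix.smul_mul]
    _ = Uᵀ * Q * U + Uᵀ * Q * (J * U) := by
        rw [hP, Matrix.add_mul, Matrix.one_mul, Matrix.mul_add, Matrix.add_mul, hJQ]
        simp only [Matrix.mul_assoc]
    _ = 1 + R := by rw [hJU, ← Matrix.mul_assoc, hUQU, Matrix.one_mul]

theorem two_smul_sub_one_mul_eq {W R : Matrix n n ℝ} {p q : n → Prop} [DecidablePred p]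
    [DecidablePred q] (hW : (2 : ℝ) • (Uᵀ * W * U) = 1 + R)
    (hPR : diagProj p * R = R * diagProj q) :
    ((2 : ℝ) • (U * diagProj p * Uᵀ * W) - 1) * U =
      U * (R * diagProj q - diagProj fun i => ¬p i) := by
  calc ((2 : ℝ) • (U * diagProj p * Uᵀ * W) - 1) * U
      = U * diagProj p * ((2 : ℝ) • (Uᵀ * W * U)) - U := by
        rw [Matrix.sub_mul, Matrix.one_mul, Matrix.smul_mul, Matrix.mul_smul]
        simp only [Matrix.mul_assoc]
    _ = U * (R * diagProj q - (1 - diagProj p)) := by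
        rw [hW, Matrix.mul_add, Matrix.mul_one, Matrix.mul_assoc, hPR]
        simp only [Matrix.mul_sub, Matrix.mul_one]
        abel
    _ = U * (R * diagProj q - diagProj fun i => ¬p i) := by rw [one_sub_diagProj]

theorem trace_transpose_mul_mul_of_mul_eq {B C : Matrix n n ℝ} (hUQU : Uᵀ * Q * U = 1)
    (hBU : B * U = U * C) (D : Matrix n n ℝ) :
    trace (Bᵀ * Q * B * (U * D * Uᵀ)) = trace (Cᵀ * C * D) := by
  calc trace (Bᵀ * Q * B * (U * D * Uᵀ)) = trace ((B * U)ᵀ * Q * (B * U) * D) := by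
        rw [← Matrix.mul_assoc, trace_mul_comm, transpose_mul]
        simp only [Matrix.mul_assoc]
    _ = trace (Cᵀ * (Uᵀ * Q * U) * C * D) := by
        rw [hBU, transpose_mul]
        simp only [Matrix.mul_assoc]
    _ = trace (Cᵀ * C * D) := by rw [hUQU, Matrix.mul_one]

end GeneralizedEigen

theorem mul_eq_mul_revPerm_of_fold {N : ℕ} {J U : Matrix (Fin N) (Fin N) ℝ}
    (hfold : ∀ k : Fin N, (fun i => U i k.rev) = J *ᵥ (fun i => U i k)) :
    J * U = U * Fin.revPerm.permMatrix ℝ := by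
  rw [PEquiv.mul_toMatrix_toPEquiv, Fin.revPerm_symm]
  ext i k
  exact (congrFun (hfold k) i).symm

theorem expected_reconstruction_error_general
    {N s : ℕ}
    (M : Matrix (Fin N) (Fin N) ℝ) (hM : M.PosDef)
    (S : Finset (Fin N))
    (J : Matrix (Fin N) (Fin N) ℝ)
    (hJ : J = Matrix.diagonal (fun i => if i ∈ S then (1 : ℝ) else -1))
    (Q : Matrix (Fin N) (Fin N) ℝ)
    (hQ : ∀ i j, Q i j =
      if (i ∈ S ∧ j ∈ S) ∨ (i ∉ S ∧ j ∉ S) then M i j else 0)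
    (lam : Fin N → ℝ) (hlam : Monotone lam)
    (U : Matrix (Fin N) (Fin N) ℝ)
    (hUQU : Uᵀ * Q * U = 1)
    (hMU : M * U = Q * U * Matrix.diagonal lam)
    (hfold : ∀ k : Fin N, (fun i => U i k.rev) = J.mulVec (fun i => U i k))
    (hcardL : Fintype.card {k : Fin N // lam k < 1} = s)
    (hcardH : Fintype.card {k : Fin N // 1 < lam k} = s)
    (QS : Matrix {i : Fin N // i ∈ S} {i : Fin N // i ∈ S} ℝ)
    (hQS : QS = M.submatrix Subtype.val Subtype.val)
    (UVL : Matrix (Fin N) {k : Fin N // lam k < 1} ℝ)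
    (hUVL : UVL = U.submatrix id Subtype.val)
    (USL : Matrix {i : Fin N // i ∈ S} {k : Fin N // lam k < 1} ℝ)
    (hUSL : USL = U.submatrix Subtype.val Subtype.val)
    {Ω : Type*} [MeasurableSpace Ω] (μ : Measure Ω)
    (x : Ω → Fin N → ℝ)
    (hintxx : ∀ i j, Integrable (fun ω => x ω i * x ω j) μ)
    (hcov : ∀ i j, ∫ ω, x ω i * x ω j ∂μ = M⁻¹ i j)
    (xt : Ω → Fin N → ℝ)
    (hxt : ∀ ω, xt ω = ((2 : ℝ) • (UVL * (USLᵀ * QS))).mulVec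
      (fun j : {i : Fin N // i ∈ S} => x ω j.val)) :
    ∫ ω, (xt ω - x ω) ⬝ᵥ Q.mulVec (xt ω - x ω) ∂μ =
      2 * (∑ k ∈ Finset.univ.filter (fun k : Fin N => 1 < lam k), (lam k)⁻¹) +
        ((N : ℝ) - 2 * s) := by
  subst hJ
  have hQ' : IsBlockDiagPart S M Q := hQ
  have hMsymm : Mᵀ = M := by
    simpa [conjTranspose_eq_transpose_of_trivial] using hM.isHermitian.eq
  set R := Fin.revPerm.permMatrix ℝ (n := Fin N)
  set B := (2 : ℝ) • (U * diagProj (lam · < 1) * Uᵀ * (diagProj (· ∈ S) * Q)) - 1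
  have herr : ∀ ω, xt ω - x ω = B *ᵥ x ω := fun ω => by
    rw [hxt, hUVL, hUSL, hQS, smul_mulVec, submatrix_mul_submatrix_mulVec_comp_val,
      hQ'.diagProj_mul_mul_diagProj, ← smul_mulVec, sub_mulVec, one_mulVec]
  have hPR : diagProj (lam · < 1) * R = R * diagProj (1 < lam ·) :=
    diagProj_mul_permMatrix _ _ (hlam.lt_iff_lt_apply_rev (hcardL.trans hcardH.symm))
  have hBU : B * U = U * (R * diagProj (1 < lam ·) - diagProj fun k => ¬lam k < 1) :=
    two_smul_sub_one_mul_eq (two_smul_transpose_mul_mul_eq hUQU hQ'.signs_mul_comm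
      (mul_eq_mul_revPerm_of_fold hfold) (two_smul_diagProj_mem S)) hPR
  calc ∫ ω, (xt ω - x ω) ⬝ᵥ Q *ᵥ (xt ω - x ω) ∂μ = ∫ ω, x ω ⬝ᵥ (Bᵀ * Q * B) *ᵥ x ω ∂μ := by
        simp_rw [herr, ← mulVec_mulVec, dotProduct_mulVec _ Bᵀ, vecMul_transpose]
    _ = trace (Bᵀ * Q * B * (M⁻¹)ᵀ) := integral_dotProduct_mulVec_eq_trace hintxx hcov _
    _ = trace ((diagProj (1 < lam ·) + diagProj fun k => ¬lam k < 1) *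
          diagonal fun k => (lam k)⁻¹) := by
        rw [transpose_nonsing_inv, hMsymm, inv_eq_of_generalized_eig (hQ'.transpose_eq hMsymm)
          hUQU hMU fun k => (hM.pos_of_generalized_eig hUQU hMU k).ne',
          trace_transpose_mul_mul_of_mul_eq hUQU hBU,
          transpose_mul_self_of_diagProj_mul_permMatrix _ _ hPR]
    _ = ∑ k, ((if 1 < lam k then 1 else 0) + (if ¬lam k < 1 then 1 else 0)) * (lam k)⁻¹ := by
        simp [diagProj, trace, diagonal_add, diagonal_mul_diagonal]
    _ = _ := by rw [sum_weighted_inv_eq, hcardL, hcardH, Fintype.card_fin]; ring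

/-- Expected reconstruction error: under the spectral-folding setup with M
positive definite and |L| = |H| = |S| = s, if x is a random vector with mean
zero and covariance M⁻¹, and x̃ = 2 U_{VL} U_{SL}ᵀ Q_S x_S, then
E[‖x̃ − x‖²_Q] = 2 Σ_{k∈H} 1/λ_k + (N − 2s). -/
theorem expected_reconstruction_error
    {N s : ℕ} (hN : 1 ≤ N)
    (M : Matrix (Fin N) (Fin N) ℝ) (hM : M.PosDef)
    (S : Finset (Fin N)) (hsS : s = S.card)
    (J : Matrix (Fin N) (Fin N) ℝ)
    (hJ : J = Matrix.diagonal (fun i => if i ∈ S then (1 : ℝ) else -1))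
    (Q : Matrix (Fin N) (Fin N) ℝ)
    (hQ : ∀ i j, Q i j =
      if (i ∈ S ∧ j ∈ S) ∨ (i ∉ S ∧ j ∉ S) then M i j else 0)
    (lam : Fin N → ℝ) (hlam : Monotone lam)
    (U : Matrix (Fin N) (Fin N) ℝ)
    (hUQU : Uᵀ * Q * U = 1)
    (hMU : M * U = Q * U * Matrix.diagonal lam)
    (hfold : ∀ k : Fin N, (fun i => U i k.rev) = J.mulVec (fun i => U i k))
    (hcardL : Fintype.card {k : Fin N // lam k < 1} = s)
    (hcardH : Fintype.card {k : Fin N // 1 < lam k} = s)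
    (QS : Matrix {i : Fin N // i ∈ S} {i : Fin N // i ∈ S} ℝ)
    (hQS : QS = M.submatrix Subtype.val Subtype.val)
    (UVL : Matrix (Fin N) {k : Fin N // lam k < 1} ℝ)
    (hUVL : UVL = U.submatrix id Subtype.val)
    (USL : Matrix {i : Fin N // i ∈ S} {k : Fin N // lam k < 1} ℝ)
    (hUSL : USL = U.submatrix Subtype.val Subtype.val)
    {Ω : Type*} [MeasurableSpace Ω] (μ : Measure Ω) [IsProbabilityMeasure μ]
    (x : Ω → Fin N → ℝ)
    (hintx : ∀ i, Integrable (fun ω => x ω i) μ)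
    (hmean : ∀ i, ∫ ω, x ω i ∂μ = 0)
    (hintxx : ∀ i j, Integrable (fun ω => x ω i * x ω j) μ)
    (hcov : ∀ i j, ∫ ω, x ω i * x ω j ∂μ = M⁻¹ i j)
    (xt : Ω → Fin N → ℝ)
    (hxt : ∀ ω, xt ω = ((2 : ℝ) • (UVL * (USLᵀ * QS))).mulVec
      (fun j : {i : Fin N // i ∈ S} => x ω j.val)) :
    ∫ ω, (xt ω - x ω) ⬝ᵥ Q.mulVec (xt ω - x ω) ∂μ =
      2 * (∑ k ∈ Finset.univ.filter (fun k : Fin N => 1 < lam k), (lam k)⁻¹) +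
        ((N : ℝ) - 2 * s) :=
  expected_reconstruction_error_general M hM S J hJ Q hQ lam hlam U hUQU hMU hfold hcardL hcardH QS
    hQS UVL hUVL USL hUSL μ x hintxx hcov xt hxt
end
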